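/- arXiv:1307.5141 — 3 statements merged into one kernel-verified Lean document; each statement's English description precedes it below -/
import Mathlib

section
/- For every integer m ≥ 0, every real k, and every nonzero complex λ, the function u(x,y) = Re[∂ᵐ/∂λᵐ exp(i(k/2)(λz + z̄/λ))], where z = x + iy, satisfies the Helmholtz equation −Δu = k²u on ℝ². -/
noncomputable def pdx (f : ℝ → ℝ → ℝ) : ℝ → ℝ → ℝ := fun x y => deriv (fun t => f t y) x
noncomputable def pdy (f : ℝ → ℝ → ℝ) : ℝ → ℝ → ℝ := fun x y => deriv (fun t => f x t) y
noncomputable def lap (f : ℝ → ℝ → ℝ) : ℝ → ℝ → ℝ :=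
  fun x y => pdx (pdx f) x y + pdy (pdy f) x y

/-- The function u(x,y) = Re[∂ᵐ/∂λᵐ exp(i(k/2)(λz + z̄/λ))], z = x+iy. -/
noncomputable def uFun (m : ℕ) (k : ℝ) (lam : ℂ) (x y : ℝ) : ℝ :=
  (iteratedDeriv m
    (fun l : ℂ => Complex.exp (Complex.I * (k / 2) *
      (l * (x + y * Complex.I) + (x - y * Complex.I) / l))) lam).re


/-!
Treat `Φ(z, w, λ) = exp (c (λ z + w / λ))`, `c = i k / 2`, as a holomorphic function of three
independent complex variables on `λ ≠ 0`. It satisfies `∂_z ∂_w Φ = c² Φ`, and since `∂_z`, `∂_w`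
commute with `∂_λ` (symmetry of second derivatives), so does every `V = ∂_λ^m Φ`. On the real
plane `w = z̄`, `z = x + i y`, Wirtinger calculus gives `Δ (Re V) = Re (4 ∂_z ∂_w V) = 4 c² Re V`,
and `4 c² = -k²`.
-/

open Complex Set Filter
open scoped ContDiff Topology

section SecondDerivative

variable {𝕜 E G : Type*} [RCLike 𝕜] [NormedAddCommGroup E] [NormedSpace 𝕜 E]
  [NormedAddCommGroup G] [NormedSpace 𝕜 G] {F F₁ F₂ : E → G} {U : Set E} {p : E}

theorem ContDiffAt.fderiv_fderiv_apply (hF : ContDiffAt 𝕜 2 F p) (v w : E) :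
    fderiv 𝕜 (fun q => fderiv 𝕜 F q w) p v = fderiv 𝕜 (fderiv 𝕜 F) p v w := by
  have hd : DifferentiableAt 𝕜 (fderiv 𝕜 F) p :=
    (hF.fderiv_right (m := 1) le_rfl).differentiableAt one_ne_zero
  rw [fderiv_clm_apply hd (differentiableAt_const w)]
  simp

theorem ContDiffAt.fderiv_fderiv_apply_comm (hF : ContDiffAt 𝕜 2 F p) (v w : E) :
    fderiv 𝕜 (fun q => fderiv 𝕜 F q w) p v = fderiv 𝕜 (fun q => fderiv 𝕜 F q v) p w := by
  rw [hF.fderiv_fderiv_apply, hF.fderiv_fderiv_apply]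
  exact (hF.isSymmSndFDerivAt (by simp)).eq v w

theorem Set.EqOn.fderiv_of_isOpen (h : EqOn F₁ F₂ U) (hU : IsOpen U) :
    EqOn (fderiv 𝕜 F₁) (fderiv 𝕜 F₂) U := fun _ hp =>
  (h.eventuallyEq_of_mem (hU.mem_nhds hp)).fderiv_eq

theorem ContDiffOn.fderiv_apply_of_isOpen (hF : ContDiffOn 𝕜 ∞ F U) (hU : IsOpen U) (v : E) :
    ContDiffOn 𝕜 ∞ (fun p => fderiv 𝕜 F p v) U :=
  (hF.fderiv_of_isOpen hU le_rfl).clm_apply contDiffOn_const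

end SecondDerivative

section IteratedDerivSnd

variable {𝕜 E G : Type*} [RCLike 𝕜] [NormedAddCommGroup G] [NormedSpace 𝕜 G]
  {F F₁ F₂ : E × 𝕜 → G} {U : Set (E × 𝕜)}

noncomputable def iteratedDerivSnd (m : ℕ) (F : E × 𝕜 → G) (p : E × 𝕜) : G :=
  iteratedDeriv m (fun t => F (p.1, t)) p.2

@[simp]
theorem iteratedDerivSnd_zero : iteratedDerivSnd 0 F = F := rfl

theorem iteratedDerivSnd_const_smul (m : ℕ) (c : 𝕜) :
    iteratedDerivSnd m (c • F) = c • iteratedDerivSnd m F := by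
  funext p
  exact iteratedDeriv_const_smul_field c _

theorem Set.EqOn.iteratedDerivSnd_of_isOpen [TopologicalSpace E] (h : EqOn F₁ F₂ U)
    (hU : IsOpen U) (m : ℕ) : EqOn (iteratedDerivSnd m F₁) (iteratedDerivSnd m F₂) U :=
  fun p hp => EqOn.iteratedDeriv_of_isOpen (s := {t | (p.1, t) ∈ U}) (fun _ ht => h ht)
    (hU.preimage (Continuous.prodMk_right p.1)) m hp

variable [NormedAddCommGroup E] [NormedSpace 𝕜 E]

theorem DifferentiableAt.hasDerivAt_comp_prodMk {e : E} {t : 𝕜}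
    (hF : DifferentiableAt 𝕜 F (e, t)) :
    HasDerivAt (fun s => F (e, s)) (fderiv 𝕜 F (e, t) (0, 1)) t :=
  hF.hasFDerivAt.comp_hasDerivAt t ((hasDerivAt_const t e).prodMk (hasDerivAt_id t))

theorem iteratedDerivSnd_succ_apply {m : ℕ} {p : E × 𝕜}
    (hF : DifferentiableAt 𝕜 (iteratedDerivSnd m F) p) :
    iteratedDerivSnd (m + 1) F p = fderiv 𝕜 (iteratedDerivSnd m F) p (0, 1) := by
  rw [iteratedDerivSnd, iteratedDeriv_succ]
  exact (hF.hasDerivAt_comp_prodMk (e := p.1)).deriv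

theorem ContDiffOn.iteratedDerivSnd (hF : ContDiffOn 𝕜 ∞ F U) (hU : IsOpen U) (m : ℕ) :
    ContDiffOn 𝕜 ∞ (iteratedDerivSnd m F) U := by
  induction m with
  | zero => simpa using hF
  | succ m ih =>
    refine (ih.fderiv_apply_of_isOpen hU (0, 1)).congr fun p hp => ?_
    exact iteratedDerivSnd_succ_apply
      ((ih.contDiffAt (hU.mem_nhds hp)).differentiableAt (by simp))

theorem iteratedDerivSnd_succ_eqOn (hF : ContDiffOn 𝕜 ∞ F U) (hU : IsOpen U) (m : ℕ) :
    EqOn (iteratedDerivSnd (m + 1) F) (fun p => fderiv 𝕜 (iteratedDerivSnd m F) p (0, 1)) U :=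
  fun _ hp => iteratedDerivSnd_succ_apply
    (((hF.iteratedDerivSnd hU m).contDiffAt (hU.mem_nhds hp)).differentiableAt (by simp))

theorem fderiv_iteratedDerivSnd_apply_eqOn (hF : ContDiffOn 𝕜 ∞ F U) (hU : IsOpen U)
    (v : E × 𝕜) (m : ℕ) :
    EqOn (fun p => fderiv 𝕜 (iteratedDerivSnd m F) p v)
      (iteratedDerivSnd m (fun p => fderiv 𝕜 F p v)) U := by
  induction m with
  | zero => exact fun _ _ => rfl
  | succ m ih =>
    intro p hp
    calc fderiv 𝕜 (iteratedDerivSnd (m + 1) F) p v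
        = fderiv 𝕜 (fun q => fderiv 𝕜 (iteratedDerivSnd m F) q (0, 1)) p v := by
          rw [(iteratedDerivSnd_succ_eqOn hF hU m).fderiv_of_isOpen hU hp]
      _ = fderiv 𝕜 (fun q => fderiv 𝕜 (iteratedDerivSnd m F) q v) p (0, 1) :=
          (((hF.iteratedDerivSnd hU m).contDiffAt (hU.mem_nhds hp)).of_le (by norm_cast)
            ).fderiv_fderiv_apply_comm _ _
      _ = fderiv 𝕜 (iteratedDerivSnd m (fun q => fderiv 𝕜 F q v)) p (0, 1) := by
          rw [ih.fderiv_of_isOpen hU hp]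
      _ = iteratedDerivSnd (m + 1) (fun q => fderiv 𝕜 F q v) p :=
          (iteratedDerivSnd_succ_eqOn (hF.fderiv_apply_of_isOpen hU v) hU m hp).symm

theorem eqOn_fderiv_fderiv_iteratedDerivSnd_smul (hF : ContDiffOn 𝕜 ∞ F U) (hU : IsOpen U)
    {v w : E × 𝕜} {c : 𝕜}
    (h : EqOn (fun p => fderiv 𝕜 (fun q => fderiv 𝕜 F q w) p v) (c • F) U) (m : ℕ) :
    EqOn (fun p => fderiv 𝕜 (fun q => fderiv 𝕜 (iteratedDerivSnd m F) q w) p v)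
      (c • iteratedDerivSnd m F) U := by
  intro p hp
  calc fderiv 𝕜 (fun q => fderiv 𝕜 (iteratedDerivSnd m F) q w) p v
      = fderiv 𝕜 (iteratedDerivSnd m (fun q => fderiv 𝕜 F q w)) p v := by
        rw [(fderiv_iteratedDerivSnd_apply_eqOn hF hU w m).fderiv_of_isOpen hU hp]
    _ = iteratedDerivSnd m (fun p => fderiv 𝕜 (fun q => fderiv 𝕜 F q w) p v) p :=
        fderiv_iteratedDerivSnd_apply_eqOn (hF.fderiv_apply_of_isOpen hU w) hU v m hp
    _ = iteratedDerivSnd m (c • F) p := h.iteratedDerivSnd_of_isOpen hU m hp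
    _ = (c • iteratedDerivSnd m F) p := by rw [iteratedDerivSnd_const_smul]

end IteratedDerivSnd

section Laplacian

variable {E : Type*} [NormedAddCommGroup E] [NormedSpace ℂ E] {V W : E → ℂ} {U : Set E}
  {q : ℝ → ℝ → E}

theorem DifferentiableAt.hasDerivAt_re_comp {γ : ℝ → E} {d : E} {t : ℝ}
    (hW : DifferentiableAt ℂ W (γ t)) (hγ : HasDerivAt γ d t) :
    HasDerivAt (fun s => (W (γ s)).re) (fderiv ℂ W (γ t) d).re t :=
  reCLM.hasFDerivAt.comp_hasDerivAt t ((hW.hasFDerivAt.restrictScalars ℝ).comp_hasDerivAt t hγ)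

theorem pdx_re_comp {d : E} (hW : ∀ x y, DifferentiableAt ℂ W (q x y))
    (hq : ∀ x y, HasDerivAt (q · y) d x) :
    pdx (fun x y => (W (q x y)).re) = fun x y => (fderiv ℂ W (q x y) d).re := by
  funext x y
  exact ((hW x y).hasDerivAt_re_comp (γ := (q · y)) (hq x y)).deriv

theorem pdy_re_comp {d : E} (hW : ∀ x y, DifferentiableAt ℂ W (q x y))
    (hq : ∀ x y, HasDerivAt (q x ·) d y) :
    pdy (fun x y => (W (q x y)).re) = fun x y => (fderiv ℂ W (q x y) d).re := by
  funext x y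
  exact ((hW x y).hasDerivAt_re_comp (hq x y)).deriv

theorem lap_re_comp (hV : ContDiffOn ℂ 2 V U) (hU : IsOpen U) {d₁ d₂ : E}
    (hqU : ∀ x y, q x y ∈ U) (hq₁ : ∀ x y, HasDerivAt (q · y) d₁ x)
    (hq₂ : ∀ x y, HasDerivAt (q x ·) d₂ y) (x y : ℝ) :
    lap (fun x y => (V (q x y)).re) x y =
      (fderiv ℂ (fderiv ℂ V) (q x y) d₁ d₁ + fderiv ℂ (fderiv ℂ V) (q x y) d₂ d₂).re := by
  have hV₂ : ∀ x y, ContDiffAt ℂ 2 V (q x y) := fun x y =>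
    hV.contDiffAt (hU.mem_nhds (hqU x y))
  have hV₁ : ∀ d x y, DifferentiableAt ℂ (fun p => fderiv ℂ V p d) (q x y) := fun d x y =>
    (((hV₂ x y).fderiv_right (m := 1) le_rfl).differentiableAt one_ne_zero).clm_apply
      (differentiableAt_const d)
  have hV₀ : ∀ x y, DifferentiableAt ℂ V (q x y) := fun x y =>
    (hV₂ x y).differentiableAt (by simp)
  simp only [lap]
  rw [pdx_re_comp hV₀ hq₁, pdx_re_comp (hV₁ d₁) hq₁, pdy_re_comp hV₀ hq₂,
    pdy_re_comp (hV₁ d₂) hq₂]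
  dsimp only
  rw [(hV₂ x y).fderiv_fderiv_apply, (hV₂ x y).fderiv_fderiv_apply, add_re]

theorem lap_re_comp_wirtinger (hV : ContDiffOn ℂ 2 V U) (hU : IsOpen U) (a u v : E)
    (hqU : ∀ x y : ℝ, a + ((x : ℂ) + y * I) • u + ((x : ℂ) - y * I) • v ∈ U) (x y : ℝ) :
    lap (fun x y : ℝ => (V (a + ((x : ℂ) + y * I) • u + ((x : ℂ) - y * I) • v)).re) x y =
      4 * (fderiv ℂ (fun q => fderiv ℂ V q v)
        (a + ((x : ℂ) + y * I) • u + ((x : ℂ) - y * I) • v) u).re := by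
  have hx : ∀ x y : ℝ, HasDerivAt
      (fun s : ℝ => a + ((s : ℂ) + y * I) • u + ((s : ℂ) - y * I) • v) (u + v) x := by
    intro x y
    have h := ((((hasDerivAt_id x).ofReal_comp.add_const (y * I)).smul_const u).const_add a).add
      (((hasDerivAt_id x).ofReal_comp.sub_const (y * I)).smul_const v)
    convert h using 1
    exacts [rfl, by simp]
  have hy : ∀ x y : ℝ, HasDerivAt
      (fun t : ℝ => a + ((x : ℂ) + t * I) • u + ((x : ℂ) - t * I) • v) (I • u - I • v) y := by
    intro x y
    have h := (((((hasDerivAt_id y).ofReal_comp.mul_const I).const_add (x : ℂ)).smul_const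
      u).const_add a).add
      ((((hasDerivAt_id y).ofReal_comp.mul_const I).const_sub (x : ℂ)).smul_const v)
    convert h using 1
    exacts [rfl, by simp [sub_eq_add_neg]]
  have hV₂ : ContDiffAt ℂ 2 V (a + ((x : ℂ) + y * I) • u + ((x : ℂ) - y * I) • v) :=
    hV.contDiffAt (hU.mem_nhds (hqU x y))
  rw [lap_re_comp hV hU hqU hx hy, hV₂.fderiv_fderiv_apply]
  set B := fderiv ℂ (fderiv ℂ V) (a + ((x : ℂ) + y * I) • u + ((x : ℂ) - y * I) • v)
  have hB : B v u = B u v := (hV₂.isSymmSndFDerivAt (by simp)).eq v u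
  have key : B (u + v) (u + v) + B (I • u - I • v) (I • u - I • v) = 4 * B u v := by
    simp only [map_add, map_sub, map_smul, add_apply, sub_apply, smul_apply, smul_eq_mul, hB]
    linear_combination (B v v - 2 * B u v + B u u) * I_sq
  rw [key]
  simp

end Laplacian

section WaveKernel

/-- The points are `((z, w), λ)`; `uFun` is the real part of the `m`-th `λ`-derivative of
`waveKernel (I * (k / 2))` on the plane `w = z̄`. -/
noncomputable def waveKernel (c : ℂ) (p : (ℂ × ℂ) × ℂ) : ℂ :=
  exp (c * (p.2 * p.1.1 + p.1.2 / p.2))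

theorem contDiffOn_waveKernel (c : ℂ) : ContDiffOn ℂ ∞ (waveKernel c) {p | p.2 ≠ 0} := by
  intro p hp
  apply ContDiffAt.contDiffWithinAt
  unfold waveKernel
  fun_prop (disch := exact hp)

theorem fderiv_waveKernel_dw (c : ℂ) {p : (ℂ × ℂ) × ℂ} (hp : p.2 ≠ 0) :
    fderiv ℂ (waveKernel c) p ((0, 1), 0) = c / p.2 * waveKernel c p := by
  have hd : DifferentiableAt ℂ (waveKernel c) p := by
    unfold waveKernel
    fun_prop (disch := exact hp)
  have hline : HasLineDerivAt ℂ (waveKernel c) (c / p.2 * waveKernel c p) p ((0, 1), 0) := by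
    have h := ((((hasDerivAt_id (0 : ℂ)).const_add p.1.2).div_const p.2).const_add
      (p.2 * p.1.1)).const_mul c |>.cexp
    have e : (fun t : ℂ => waveKernel c (p + t • ((0, 1), 0))) =
        fun t => exp (c * (p.2 * p.1.1 + (p.1.2 + id t) / p.2)) := by
      funext t; simp [waveKernel]
    rw [HasLineDerivAt, e]
    refine h.congr_deriv ?_
    simp only [waveKernel, id, add_zero]
    ring
  exact HasDerivAt.unique (hd.hasFDerivAt.hasLineDerivAt _) hline

theorem fderiv_fderiv_waveKernel_dz_dw (c : ℂ) :
    EqOn (fun p => fderiv ℂ (fun q => fderiv ℂ (waveKernel c) q ((0, 1), 0)) p ((1, 0), 0))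
      (c ^ 2 • waveKernel c) {p | p.2 ≠ 0} := by
  intro p (hp : p.2 ≠ 0)
  have hdw : EqOn (fun q => fderiv ℂ (waveKernel c) q ((0, 1), 0))
      (fun q => c / q.2 * waveKernel c q) {p | p.2 ≠ 0} :=
    fun q hq => fderiv_waveKernel_dw c hq
  have hd : DifferentiableAt ℂ (fun q : (ℂ × ℂ) × ℂ => c / q.2 * waveKernel c q) p := by
    unfold waveKernel
    fun_prop (disch := exact hp)
  have hline : HasLineDerivAt ℂ (fun q => c / q.2 * waveKernel c q) (c ^ 2 * waveKernel c p) p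
      ((1, 0), 0) := by
    have h := (((((hasDerivAt_id (0 : ℂ)).const_add p.1.1).const_mul p.2).add_const
      (p.1.2 / p.2)).const_mul c).cexp.const_mul (c / p.2)
    have e : (fun t : ℂ => c / (p + t • ((1, 0), 0)).2 * waveKernel c (p + t • ((1, 0), 0))) =
        fun t => c / p.2 * exp (c * (p.2 * (p.1.1 + id t) + p.1.2 / p.2)) := by
      funext t; simp [waveKernel]
    rw [HasLineDerivAt, e]
    refine h.congr_deriv ?_
    simp only [waveKernel, id, add_zero]
    field_simp
  show fderiv ℂ _ p _ = c ^ 2 * waveKernel c p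
  rw [hdw.fderiv_of_isOpen (isOpen_ne_fun continuous_snd continuous_const) hp]
  exact HasDerivAt.unique (hd.hasFDerivAt.hasLineDerivAt _) hline

theorem point_zzbar_eq (lam : ℂ) (x y : ℝ) :
    ((0, 0), lam) + ((x : ℂ) + y * I) • ((1, 0), 0) + ((x : ℂ) - y * I) • ((0, 1), 0) =
      (((x : ℂ) + y * I, (x : ℂ) - y * I), lam) := by
  ext <;> simp

theorem uFun_eq_re_iteratedDerivSnd_waveKernel (m : ℕ) (k : ℝ) (lam : ℂ) :
    uFun m k lam = fun x y : ℝ => (iteratedDerivSnd m (waveKernel (I * (k / 2)))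
      (((0, 0), lam) + ((x : ℂ) + y * I) • ((1, 0), 0) + ((x : ℂ) - y * I) • ((0, 1), 0))).re := by
  funext x y
  rw [point_zzbar_eq]
  rfl

end WaveKernel

theorem helmholtz_family (m : ℕ) (k : ℝ) (lam : ℂ) (hlam : lam ≠ 0) :
    ∀ x y : ℝ, -(lap (uFun m k lam) x y) = k ^ 2 * uFun m k lam x y := by
  intro x y
  have hU : IsOpen {p : (ℂ × ℂ) × ℂ | p.2 ≠ 0} := isOpen_ne_fun continuous_snd continuous_const
  have hΦ := contDiffOn_waveKernel (I * (k / 2))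
  have hmem : ∀ x y : ℝ, ((0, 0), lam) + ((x : ℂ) + y * I) • ((1, 0), 0) +
      ((x : ℂ) - y * I) • ((0, 1), 0) ∈ {p : (ℂ × ℂ) × ℂ | p.2 ≠ 0} := fun x y => by
    rw [point_zzbar_eq]
    exact hlam
  have hV := eqOn_fderiv_fderiv_iteratedDerivSnd_smul hΦ hU
    (fderiv_fderiv_waveKernel_dz_dw _) m (hmem x y)
  dsimp only at hV
  have hc : (I * (k / 2 : ℂ)) ^ 2 = ((-(k ^ 2 / 4) : ℝ) : ℂ) := by
    rw [mul_pow, I_sq]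
    push_cast
    ring
  rw [uFun_eq_re_iteratedDerivSnd_waveKernel,
    lap_re_comp_wirtinger ((hΦ.iteratedDerivSnd hU m).of_le (by norm_cast)) hU _ _ _ hmem, hV,
    Pi.smul_apply, hc, smul_eq_mul, re_ofReal_mul]
  ring
end

section
/- Let U be smooth on an open set Ω ⊆ ℝ², and let ω be a smooth nowhere-vanishing solution of (−Δ + U)ω = 0 on Ω. If φ is smooth with (−Δ + U)φ = 0 on Ω, then the 1-form with components ((ωθ)_x, (ωθ)_y) prescribed by (ωθ)_x = −ω²(φ/ω)_y and (ωθ)_y = ω²(φ/ω)_x is closed, i.e. ∂_y[−ω²(φ/ω)_y] = ∂_x[ω²(φ/ω)_x] on Ω. -/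
open Function

lemma lineX_hasDerivAt (x y : ℝ) : HasDerivAt (fun t : ℝ => (t, y)) ((1:ℝ), (0:ℝ)) x :=
  (hasDerivAt_id x).prodMk (hasDerivAt_const x y)

lemma lineY_hasDerivAt (x y : ℝ) : HasDerivAt (fun t : ℝ => (x, t)) ((0:ℝ), (1:ℝ)) y :=
  (hasDerivAt_const y x).prodMk (hasDerivAt_id y)

lemma sliceX_diff {f : ℝ → ℝ → ℝ} {x y : ℝ}
    (hf : DifferentiableAt ℝ (uncurry f) (x, y)) :
    DifferentiableAt ℝ (fun t => f t y) x :=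
  by have := hf.comp x (lineX_hasDerivAt x y).differentiableAt; exact this

lemma sliceY_diff {f : ℝ → ℝ → ℝ} {x y : ℝ}
    (hf : DifferentiableAt ℝ (uncurry f) (x, y)) :
    DifferentiableAt ℝ (fun t => f x t) y :=
  hf.comp y (lineY_hasDerivAt x y).differentiableAt

lemma sliceX_hasDerivAt {f : ℝ → ℝ → ℝ} {x y : ℝ}
    (hf : DifferentiableAt ℝ (uncurry f) (x, y)) :
    HasDerivAt (fun t => f t y) (fderiv ℝ (uncurry f) (x, y) (1, 0)) x :=
  by have := hf.hasFDerivAt.comp_hasDerivAt x (lineX_hasDerivAt x y); exact this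

lemma sliceY_hasDerivAt {f : ℝ → ℝ → ℝ} {x y : ℝ}
    (hf : DifferentiableAt ℝ (uncurry f) (x, y)) :
    HasDerivAt (fun t => f x t) (fderiv ℝ (uncurry f) (x, y) (0, 1)) y :=
  hf.hasFDerivAt.comp_hasDerivAt y (lineY_hasDerivAt x y)

variable {Ω : Set (ℝ × ℝ)}

lemma diffAt_of_contDiffOn (hΩ : IsOpen Ω) {f : ℝ → ℝ → ℝ}
    (hf : ContDiffOn ℝ (⊤ : ℕ∞) (uncurry f) Ω) {x y : ℝ} (hx : (x, y) ∈ Ω) :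
    DifferentiableAt ℝ (uncurry f) (x, y) :=
  (hf.differentiableOn (by simp)).differentiableAt (hΩ.mem_nhds hx)

lemma fderiv_apply_contDiffOn (hΩ : IsOpen Ω) {f : ℝ → ℝ → ℝ}
    (hf : ContDiffOn ℝ (⊤ : ℕ∞) (uncurry f) Ω) (v : ℝ × ℝ) :
    ContDiffOn ℝ (⊤ : ℕ∞) (fun p => fderiv ℝ (uncurry f) p v) Ω := by
  have h := hf.fderiv_of_isOpen (m := (⊤ : ℕ∞)) hΩ (by simp)
  exact (ContinuousLinearMap.apply ℝ ℝ v).contDiff.comp_contDiffOn h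

lemma sliceY_mem (hΩ : IsOpen Ω) {x y : ℝ} (hx : (x, y) ∈ Ω) :
    {t | (x, t) ∈ Ω} ∈ nhds y :=
  (hΩ.preimage (Continuous.prodMk_right x)).mem_nhds hx

lemma sliceX_mem (hΩ : IsOpen Ω) {x y : ℝ} (hx : (x, y) ∈ Ω) :
    {t | (t, y) ∈ Ω} ∈ nhds x :=
  (hΩ.preimage (continuous_id.prodMk continuous_const)).mem_nhds hx

lemma evY (hΩ : IsOpen Ω) {g h : ℝ → ℝ → ℝ} (hgh : ∀ a b, (a, b) ∈ Ω → g a b = h a b)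
    {x y : ℝ} (hx : (x, y) ∈ Ω) : (fun t => g x t) =ᶠ[nhds y] (fun t => h x t) := by
  filter_upwards [sliceY_mem hΩ hx] with t ht using hgh x t ht

lemma evX (hΩ : IsOpen Ω) {g h : ℝ → ℝ → ℝ} (hgh : ∀ a b, (a, b) ∈ Ω → g a b = h a b)
    {x y : ℝ} (hx : (x, y) ∈ Ω) : (fun t => g t y) =ᶠ[nhds x] (fun t => h t y) := by
  filter_upwards [sliceX_mem hΩ hx] with t ht using hgh t y ht

lemma pdy_eq_fderiv (hΩ : IsOpen Ω) {f : ℝ → ℝ → ℝ}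
    (hf : ContDiffOn ℝ (⊤ : ℕ∞) (uncurry f) Ω) {x y : ℝ} (hx : (x, y) ∈ Ω) :
    pdy f x y = fderiv ℝ (uncurry f) (x, y) (0, 1) :=
  (sliceY_hasDerivAt (diffAt_of_contDiffOn hΩ hf hx)).deriv

lemma pdx_eq_fderiv (hΩ : IsOpen Ω) {f : ℝ → ℝ → ℝ}
    (hf : ContDiffOn ℝ (⊤ : ℕ∞) (uncurry f) Ω) {x y : ℝ} (hx : (x, y) ∈ Ω) :
    pdx f x y = fderiv ℝ (uncurry f) (x, y) (1, 0) :=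
  (sliceX_hasDerivAt (diffAt_of_contDiffOn hΩ hf hx)).deriv

lemma pdy_slice_diffY (hΩ : IsOpen Ω) {f : ℝ → ℝ → ℝ}
    (hf : ContDiffOn ℝ (⊤ : ℕ∞) (uncurry f) Ω) {x y : ℝ} (hx : (x, y) ∈ Ω) :
    DifferentiableAt ℝ (fun t => pdy f x t) y := by
  set G : ℝ × ℝ → ℝ := fun p => fderiv ℝ (uncurry f) p (0, 1) with hG
  have hGd : DifferentiableAt ℝ G (x, y) :=
    ((fderiv_apply_contDiffOn hΩ hf (0, 1)).differentiableOn (by simp)).differentiableAt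
      (hΩ.mem_nhds hx)
  have hGs : DifferentiableAt ℝ (fun t => G (x, t)) y :=
    hGd.comp y (lineY_hasDerivAt x y).differentiableAt
  apply hGs.congr_of_eventuallyEq
  filter_upwards [sliceY_mem hΩ hx] with t ht
  exact pdy_eq_fderiv hΩ hf ht

lemma pdx_slice_diffX (hΩ : IsOpen Ω) {f : ℝ → ℝ → ℝ}
    (hf : ContDiffOn ℝ (⊤ : ℕ∞) (uncurry f) Ω) {x y : ℝ} (hx : (x, y) ∈ Ω) :
    DifferentiableAt ℝ (fun t => pdx f t y) x := by
  set G : ℝ × ℝ → ℝ := fun p => fderiv ℝ (uncurry f) p (1, 0) with hG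
  have hGd : DifferentiableAt ℝ G (x, y) :=
    ((fderiv_apply_contDiffOn hΩ hf (1, 0)).differentiableOn (by simp)).differentiableAt
      (hΩ.mem_nhds hx)
  have hGs : DifferentiableAt ℝ (fun t => G (t, y)) x :=
    by have := hGd.comp x (lineX_hasDerivAt x y).differentiableAt; exact this
  apply hGs.congr_of_eventuallyEq
  filter_upwards [sliceX_mem hΩ hx] with t ht
  exact pdx_eq_fderiv hΩ hf ht

lemma pdy_pdy_hasDerivAt (hΩ : IsOpen Ω) {f : ℝ → ℝ → ℝ}
    (hf : ContDiffOn ℝ (⊤ : ℕ∞) (uncurry f) Ω) {x y : ℝ} (hx : (x, y) ∈ Ω) :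
    HasDerivAt (fun t => pdy f x t) (pdy (pdy f) x y) y :=
  (pdy_slice_diffY hΩ hf hx).hasDerivAt

lemma pdx_pdx_hasDerivAt (hΩ : IsOpen Ω) {f : ℝ → ℝ → ℝ}
    (hf : ContDiffOn ℝ (⊤ : ℕ∞) (uncurry f) Ω) {x y : ℝ} (hx : (x, y) ∈ Ω) :
    HasDerivAt (fun t => pdx f t y) (pdx (pdx f) x y) x :=
  (pdx_slice_diffX hΩ hf hx).hasDerivAt
theorem moutard_system_closed
    (Ω : Set (ℝ × ℝ)) (hΩ : IsOpen Ω)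
    (U ω φ : ℝ → ℝ → ℝ)
    (hU : ContDiffOn ℝ (⊤ : ℕ∞) (Function.uncurry U) Ω)
    (hω : ContDiffOn ℝ (⊤ : ℕ∞) (Function.uncurry ω) Ω)
    (hφ : ContDiffOn ℝ (⊤ : ℕ∞) (Function.uncurry φ) Ω)
    (hωne : ∀ x y, (x, y) ∈ Ω → ω x y ≠ 0)
    (hωeq : ∀ x y, (x, y) ∈ Ω → -(lap ω x y) + U x y * ω x y = 0)
    (hφeq : ∀ x y, (x, y) ∈ Ω → -(lap φ x y) + U x y * φ x y = 0) :
    ∀ x y, (x, y) ∈ Ω →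
      pdy (fun a b => -(ω a b) ^ 2 * pdy (fun s t => φ s t / ω s t) a b) x y =
      pdx (fun a b => (ω a b) ^ 2 * pdx (fun s t => φ s t / ω s t) a b) x y := by
  intro x y hx
  -- rewrite the two integrands on Ω
  have heqA : ∀ a b, (a, b) ∈ Ω →
      -(ω a b) ^ 2 * pdy (fun s t => φ s t / ω s t) a b
        = φ a b * pdy ω a b - ω a b * pdy φ a b := by
    intro a b hab
    have hφd : HasDerivAt (fun t => φ a t) (pdy φ a b) b :=
      (sliceY_diff (diffAt_of_contDiffOn hΩ hφ hab)).hasDerivAt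
    have hωd : HasDerivAt (fun t => ω a t) (pdy ω a b) b :=
      (sliceY_diff (diffAt_of_contDiffOn hΩ hω hab)).hasDerivAt
    have hdiv := (hφd.div hωd (hωne a b hab)).deriv
    have hpd : pdy (fun s t => φ s t / ω s t) a b
        = (pdy φ a b * ω a b - φ a b * pdy ω a b) / ω a b ^ 2 := hdiv
    rw [hpd]
    have hne := hωne a b hab
    field_simp
    ring
  have heqB : ∀ a b, (a, b) ∈ Ω →
      (ω a b) ^ 2 * pdx (fun s t => φ s t / ω s t) a b
        = ω a b * pdx φ a b - φ a b * pdx ω a b := by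
    intro a b hab
    have hφd : HasDerivAt (fun t => φ t b) (pdx φ a b) a :=
      (sliceX_diff (diffAt_of_contDiffOn hΩ hφ hab)).hasDerivAt
    have hωd : HasDerivAt (fun t => ω t b) (pdx ω a b) a :=
      (sliceX_diff (diffAt_of_contDiffOn hΩ hω hab)).hasDerivAt
    have hdiv := (hφd.div hωd (hωne a b hab)).deriv
    have hpd : pdx (fun s t => φ s t / ω s t) a b
        = (pdx φ a b * ω a b - φ a b * pdx ω a b) / ω a b ^ 2 := hdiv
    rw [hpd]
    have hne := hωne a b hab
    field_simp
  have hA : pdy (fun a b => -(ω a b) ^ 2 * pdy (fun s t => φ s t / ω s t) a b) x y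
      = pdy (fun a b => φ a b * pdy ω a b - ω a b * pdy φ a b) x y :=
    (evY hΩ heqA hx).deriv_eq
  have hB : pdx (fun a b => (ω a b) ^ 2 * pdx (fun s t => φ s t / ω s t) a b) x y
      = pdx (fun a b => ω a b * pdx φ a b - φ a b * pdx ω a b) x y :=
    (evX hΩ heqB hx).deriv_eq
  rw [hA, hB]
  -- compute the derivatives of the rewritten forms
  have h1 : HasDerivAt (fun t => φ x t) (pdy φ x y) y :=
    (sliceY_diff (diffAt_of_contDiffOn hΩ hφ hx)).hasDerivAt
  have h2 : HasDerivAt (fun t => pdy ω x t) (pdy (pdy ω) x y) y :=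
    pdy_pdy_hasDerivAt hΩ hω hx
  have h3 : HasDerivAt (fun t => ω x t) (pdy ω x y) y :=
    (sliceY_diff (diffAt_of_contDiffOn hΩ hω hx)).hasDerivAt
  have h4 : HasDerivAt (fun t => pdy φ x t) (pdy (pdy φ) x y) y :=
    pdy_pdy_hasDerivAt hΩ hφ hx
  have hAder : pdy (fun a b => φ a b * pdy ω a b - ω a b * pdy φ a b) x y
      = (pdy φ x y * pdy ω x y + φ x y * pdy (pdy ω) x y)
        - (pdy ω x y * pdy φ x y + ω x y * pdy (pdy φ) x y) :=
    ((h1.mul h2).sub (h3.mul h4)).deriv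
  have g1 : HasDerivAt (fun t => ω t y) (pdx ω x y) x :=
    (sliceX_diff (diffAt_of_contDiffOn hΩ hω hx)).hasDerivAt
  have g2 : HasDerivAt (fun t => pdx φ t y) (pdx (pdx φ) x y) x :=
    pdx_pdx_hasDerivAt hΩ hφ hx
  have g3 : HasDerivAt (fun t => φ t y) (pdx φ x y) x :=
    (sliceX_diff (diffAt_of_contDiffOn hΩ hφ hx)).hasDerivAt
  have g4 : HasDerivAt (fun t => pdx ω t y) (pdx (pdx ω) x y) x :=
    pdx_pdx_hasDerivAt hΩ hω hx
  have hBder : pdx (fun a b => ω a b * pdx φ a b - φ a b * pdx ω a b) x y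
      = (pdx ω x y * pdx φ x y + ω x y * pdx (pdx φ) x y)
        - (pdx φ x y * pdx ω x y + φ x y * pdx (pdx ω) x y) :=
    ((g1.mul g2).sub (g3.mul g4)).deriv
  rw [hAder, hBder]
  have hlω := hωeq x y hx
  have hlφ := hφeq x y hx
  simp only [lap] at hlω hlφ
  linear_combination (ω x y) * hlφ - (φ x y) * hlω
end

section
/- Let U be smooth on a simply connected open set Ω ⊆ ℝ², ω a smooth nowhere-vanishing solution of (−Δ + U)ω = 0, and φ a smooth solution of (−Δ + U)φ = 0 on Ω. If θ is a smooth function satisfying (ωθ)_x = −ω²(φ/ω)_y and (ωθ)_y = ω²(φ/ω)_x on Ω, then θ satisfies (−Δ + Ũ)θ = 0 where Ũ = U − 2Δ log ω. -/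
section MoutardAux

open Function

variable {E : Type*} [NormedAddCommGroup E] [NormedSpace ℝ E]

lemma moutard_hasDerivAt_slice_x {F : ℝ × ℝ → E} {x y : ℝ}
    (hF : DifferentiableAt ℝ F (x, y)) :
    HasDerivAt (fun t => F (t, y)) (fderiv ℝ F (x, y) (1, 0)) x :=
  hF.hasFDerivAt.comp_hasDerivAt x ((hasDerivAt_id x).prodMk (hasDerivAt_const x y))

lemma moutard_hasDerivAt_slice_y {F : ℝ × ℝ → E} {x y : ℝ}
    (hF : DifferentiableAt ℝ F (x, y)) :
    HasDerivAt (fun t => F (x, t)) (fderiv ℝ F (x, y) (0, 1)) y :=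
  hF.hasFDerivAt.comp_hasDerivAt y ((hasDerivAt_const y x).prodMk (hasDerivAt_id y))

variable {Ω : Set (ℝ × ℝ)} {f g : ℝ → ℝ → ℝ}

lemma moutard_diffAt (hΩ : IsOpen Ω) (hf : ContDiffOn ℝ (⊤ : ℕ∞) (uncurry f) Ω) {x y : ℝ}
    (h : (x, y) ∈ Ω) : DifferentiableAt ℝ (uncurry f) (x, y) :=
  (hf.contDiffAt (hΩ.mem_nhds h)).differentiableAt (by simp)

lemma pdx_eq (hΩ : IsOpen Ω) (hf : ContDiffOn ℝ (⊤ : ℕ∞) (uncurry f) Ω) {x y : ℝ}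
    (h : (x, y) ∈ Ω) : pdx f x y = fderiv ℝ (uncurry f) (x, y) (1, 0) :=
  (moutard_hasDerivAt_slice_x (moutard_diffAt hΩ hf h)).deriv

lemma pdy_eq (hΩ : IsOpen Ω) (hf : ContDiffOn ℝ (⊤ : ℕ∞) (uncurry f) Ω) {x y : ℝ}
    (h : (x, y) ∈ Ω) : pdy f x y = fderiv ℝ (uncurry f) (x, y) (0, 1) :=
  (moutard_hasDerivAt_slice_y (moutard_diffAt hΩ hf h)).deriv

lemma hasDerivAt_pdx (hΩ : IsOpen Ω) (hf : ContDiffOn ℝ (⊤ : ℕ∞) (uncurry f) Ω) {x y : ℝ}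
    (h : (x, y) ∈ Ω) : HasDerivAt (fun t => f t y) (pdx f x y) x := by
  rw [pdx_eq hΩ hf h]; exact moutard_hasDerivAt_slice_x (moutard_diffAt hΩ hf h)

lemma hasDerivAt_pdy (hΩ : IsOpen Ω) (hf : ContDiffOn ℝ (⊤ : ℕ∞) (uncurry f) Ω) {x y : ℝ}
    (h : (x, y) ∈ Ω) : HasDerivAt (fun t => f x t) (pdy f x y) y := by
  rw [pdy_eq hΩ hf h]; exact moutard_hasDerivAt_slice_y (moutard_diffAt hΩ hf h)

lemma contDiffOn_pdx (hΩ : IsOpen Ω) (hf : ContDiffOn ℝ (⊤ : ℕ∞) (uncurry f) Ω) :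
    ContDiffOn ℝ (⊤ : ℕ∞) (uncurry (pdx f)) Ω := by
  have h2 : ContDiffOn ℝ (⊤ : ℕ∞) (fun p => fderiv ℝ (uncurry f) p (1, 0)) Ω :=
    (hf.fderiv_of_isOpen hΩ (by simp)).clm_apply contDiffOn_const
  exact h2.congr fun p hp => by obtain ⟨x, y⟩ := p; exact pdx_eq hΩ hf hp

lemma contDiffOn_pdy (hΩ : IsOpen Ω) (hf : ContDiffOn ℝ (⊤ : ℕ∞) (uncurry f) Ω) :
    ContDiffOn ℝ (⊤ : ℕ∞) (uncurry (pdy f)) Ω := by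
  have h2 : ContDiffOn ℝ (⊤ : ℕ∞) (fun p => fderiv ℝ (uncurry f) p (0, 1)) Ω :=
    (hf.fderiv_of_isOpen hΩ (by simp)).clm_apply contDiffOn_const
  exact h2.congr fun p hp => by obtain ⟨x, y⟩ := p; exact pdy_eq hΩ hf hp

lemma moutard_mem_slice_x (hΩ : IsOpen Ω) {x y : ℝ} (h : (x, y) ∈ Ω) :
    ∀ᶠ t in nhds x, (t, y) ∈ Ω :=
  (Continuous.continuousAt (by continuity : Continuous fun t : ℝ => (t, y)))
    (hΩ.mem_nhds h)

lemma moutard_mem_slice_y (hΩ : IsOpen Ω) {x y : ℝ} (h : (x, y) ∈ Ω) :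
    ∀ᶠ t in nhds y, (x, t) ∈ Ω :=
  (Continuous.continuousAt (by continuity : Continuous fun t : ℝ => (x, t)))
    (hΩ.mem_nhds h)

lemma pdx_congr (hΩ : IsOpen Ω) (h : ∀ a b, (a, b) ∈ Ω → f a b = g a b)
    {x y : ℝ} (hxy : (x, y) ∈ Ω) : pdx f x y = pdx g x y := by
  apply Filter.EventuallyEq.deriv_eq
  filter_upwards [moutard_mem_slice_x hΩ hxy] with t ht using h t y ht

lemma pdy_congr (hΩ : IsOpen Ω) (h : ∀ a b, (a, b) ∈ Ω → f a b = g a b)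
    {x y : ℝ} (hxy : (x, y) ∈ Ω) : pdy f x y = pdy g x y := by
  apply Filter.EventuallyEq.deriv_eq
  filter_upwards [moutard_mem_slice_y hΩ hxy] with t ht using h x t ht

lemma pd_symm (hΩ : IsOpen Ω) (hf : ContDiffOn ℝ (⊤ : ℕ∞) (uncurry f) Ω) {x y : ℝ}
    (hxy : (x, y) ∈ Ω) : pdx (pdy f) x y = pdy (pdx f) x y := by
  set F := uncurry f with hF
  set Φ : ℝ × ℝ → (ℝ × ℝ) →L[ℝ] ℝ := fun p => fderiv ℝ F p with hΦdef
  have hΦ : ContDiffOn ℝ (⊤ : ℕ∞) Φ Ω := hf.fderiv_of_isOpen hΩ (by simp)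
  have hΦd : DifferentiableAt ℝ Φ (x, y) :=
    (hΦ.contDiffAt (hΩ.mem_nhds hxy)).differentiableAt (by simp)
  have hsymm : ∀ v w : ℝ × ℝ, fderiv ℝ Φ (x, y) v w = fderiv ℝ Φ (x, y) w v := by
    intro v w
    apply second_derivative_symmetric_of_eventually (f := F) (f' := Φ)
    · filter_upwards [hΩ.mem_nhds hxy] with p hp using (moutard_diffAt hΩ hf hp).hasFDerivAt
    · exact hΦd.hasFDerivAt
  have e1 : pdx (pdy f) x y = fderiv ℝ Φ (x, y) (1, 0) (0, 1) := by
    have hval : HasDerivAt (fun t => Φ (t, y) (0, 1))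
        (fderiv ℝ Φ (x, y) (1, 0) (0, 1)) x := by
      simpa using
        (moutard_hasDerivAt_slice_x hΦd).clm_apply (hasDerivAt_const x ((0:ℝ), (1:ℝ)))
    have h2 : deriv (fun t => pdy f t y) x = deriv (fun t => Φ (t, y) (0, 1)) x := by
      apply Filter.EventuallyEq.deriv_eq
      filter_upwards [moutard_mem_slice_x hΩ hxy] with t ht using pdy_eq hΩ hf ht
    rw [show pdx (pdy f) x y = deriv (fun t => pdy f t y) x from rfl, h2, hval.deriv]
  have e2 : pdy (pdx f) x y = fderiv ℝ Φ (x, y) (0, 1) (1, 0) := by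
    have hval : HasDerivAt (fun t => Φ (x, t) (1, 0))
        (fderiv ℝ Φ (x, y) (0, 1) (1, 0)) y := by
      simpa using
        (moutard_hasDerivAt_slice_y hΦd).clm_apply (hasDerivAt_const y ((1:ℝ), (0:ℝ)))
    have h2 : deriv (fun t => pdx f x t) y = deriv (fun t => Φ (x, t) (1, 0)) y := by
      apply Filter.EventuallyEq.deriv_eq
      filter_upwards [moutard_mem_slice_y hΩ hxy] with t ht using pdx_eq hΩ hf ht
    rw [show pdy (pdx f) x y = deriv (fun t => pdx f x t) y from rfl, h2, hval.deriv]
  rw [e1, e2, hsymm]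

end MoutardAux

theorem moutard_transform
    (Ω : Set (ℝ × ℝ)) (hΩ : IsOpen Ω) (hsc : SimplyConnectedSpace Ω)
    (U ω φ θ : ℝ → ℝ → ℝ)
    (hU : ContDiffOn ℝ (⊤ : ℕ∞) (Function.uncurry U) Ω)
    (hω : ContDiffOn ℝ (⊤ : ℕ∞) (Function.uncurry ω) Ω)
    (hφ : ContDiffOn ℝ (⊤ : ℕ∞) (Function.uncurry φ) Ω)
    (hθ : ContDiffOn ℝ (⊤ : ℕ∞) (Function.uncurry θ) Ω)
    (hωpos : ∀ x y, (x, y) ∈ Ω → 0 < ω x y)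
    (hωeq : ∀ x y, (x, y) ∈ Ω → -(lap ω x y) + U x y * ω x y = 0)
    (hφeq : ∀ x y, (x, y) ∈ Ω → -(lap φ x y) + U x y * φ x y = 0)
    (hsys1 : ∀ x y, (x, y) ∈ Ω →
      pdx (fun a b => ω a b * θ a b) x y =
        -(ω x y) ^ 2 * pdy (fun s t => φ s t / ω s t) x y)
    (hsys2 : ∀ x y, (x, y) ∈ Ω →
      pdy (fun a b => ω a b * θ a b) x y =
        (ω x y) ^ 2 * pdx (fun s t => φ s t / ω s t) x y) :
    ∀ x y, (x, y) ∈ Ω →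
      -(lap θ x y) +
        (U x y - 2 * lap (fun a b => Real.log (ω a b)) x y) * θ x y = 0 := by
  intro x y hp
  have hu : ContDiffOn ℝ (⊤ : ℕ∞) (Function.uncurry (fun s t => φ s t / ω s t)) Ω :=
    hφ.div hω (fun p hp' => ne_of_gt (hωpos p.1 p.2 (by simpa using hp')))
  -- product rule on Ω for v = ω θ
  have hA : ∀ a b, (a, b) ∈ Ω → pdx (fun a b => ω a b * θ a b) a b =
      pdx ω a b * θ a b + ω a b * pdx θ a b :=
    fun a b hab => ((hasDerivAt_pdx hΩ hω hab).mul (hasDerivAt_pdx hΩ hθ hab)).deriv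
  have hB : ∀ a b, (a, b) ∈ Ω → pdy (fun a b => ω a b * θ a b) a b =
      pdy ω a b * θ a b + ω a b * pdy θ a b :=
    fun a b hab => ((hasDerivAt_pdy hΩ hω hab).mul (hasDerivAt_pdy hΩ hθ hab)).deriv
  -- second derivatives of v, first way
  have e1 : pdx (pdx (fun a b => ω a b * θ a b)) x y =
      pdx (pdx ω) x y * θ x y + pdx ω x y * pdx θ x y +
        (pdx ω x y * pdx θ x y + ω x y * pdx (pdx θ) x y) :=
    (pdx_congr hΩ hA hp).trans
      (((hasDerivAt_pdx hΩ (contDiffOn_pdx hΩ hω) hp).mul (hasDerivAt_pdx hΩ hθ hp)).add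
        ((hasDerivAt_pdx hΩ hω hp).mul (hasDerivAt_pdx hΩ (contDiffOn_pdx hΩ hθ) hp))).deriv
  have e3 : pdy (pdy (fun a b => ω a b * θ a b)) x y =
      pdy (pdy ω) x y * θ x y + pdy ω x y * pdy θ x y +
        (pdy ω x y * pdy θ x y + ω x y * pdy (pdy θ) x y) :=
    (pdy_congr hΩ hB hp).trans
      (((hasDerivAt_pdy hΩ (contDiffOn_pdy hΩ hω) hp).mul (hasDerivAt_pdy hΩ hθ hp)).add
        ((hasDerivAt_pdy hΩ hω hp).mul (hasDerivAt_pdy hΩ (contDiffOn_pdy hΩ hθ) hp))).deriv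
  -- second derivatives of v, second way via the system
  have hs1' : ∀ a b, (a, b) ∈ Ω → pdx (fun a b => ω a b * θ a b) a b =
      -(ω a b * ω a b) * pdy (fun s t => φ s t / ω s t) a b := by
    intro a b hab; rw [hsys1 a b hab]; ring
  have hs2' : ∀ a b, (a, b) ∈ Ω → pdy (fun a b => ω a b * θ a b) a b =
      (ω a b * ω a b) * pdx (fun s t => φ s t / ω s t) a b := by
    intro a b hab; rw [hsys2 a b hab]; ring
  have e2 : pdx (pdx (fun a b => ω a b * θ a b)) x y =
      -(pdx ω x y * ω x y + ω x y * pdx ω x y) * pdy (fun s t => φ s t / ω s t) x y +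
        -(ω x y * ω x y) * pdx (pdy (fun s t => φ s t / ω s t)) x y :=
    (pdx_congr hΩ hs1' hp).trans
      ((((hasDerivAt_pdx hΩ hω hp).mul (hasDerivAt_pdx hΩ hω hp)).neg.mul
        (hasDerivAt_pdx hΩ (contDiffOn_pdy hΩ hu) hp)).deriv)
  have e4 : pdy (pdy (fun a b => ω a b * θ a b)) x y =
      (pdy ω x y * ω x y + ω x y * pdy ω x y) * pdx (fun s t => φ s t / ω s t) x y +
        (ω x y * ω x y) * pdy (pdx (fun s t => φ s t / ω s t)) x y :=
    (pdy_congr hΩ hs2' hp).trans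
      ((((hasDerivAt_pdy hΩ hω hp).mul (hasDerivAt_pdy hΩ hω hp)).mul
        (hasDerivAt_pdy hΩ (contDiffOn_pdx hΩ hu) hp)).deriv)
  have hm : pdx (pdy (fun s t => φ s t / ω s t)) x y =
      pdy (pdx (fun s t => φ s t / ω s t)) x y := pd_symm hΩ hu hp
  -- first order system at the point
  have E2 : pdx ω x y * θ x y + ω x y * pdx θ x y =
      -(ω x y) ^ 2 * pdy (fun s t => φ s t / ω s t) x y :=
    (hA x y hp).symm.trans (hsys1 x y hp)
  have E3 : pdy ω x y * θ x y + ω x y * pdy θ x y =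
      (ω x y) ^ 2 * pdx (fun s t => φ s t / ω s t) x y :=
    (hB x y hp).symm.trans (hsys2 x y hp)
  -- log derivatives
  have hlx : ∀ a b, (a, b) ∈ Ω → pdx (fun a b => Real.log (ω a b)) a b =
      pdx ω a b / ω a b :=
    fun a b hab => ((hasDerivAt_pdx hΩ hω hab).log (ne_of_gt (hωpos a b hab))).deriv
  have hly : ∀ a b, (a, b) ∈ Ω → pdy (fun a b => Real.log (ω a b)) a b =
      pdy ω a b / ω a b :=
    fun a b hab => ((hasDerivAt_pdy hΩ hω hab).log (ne_of_gt (hωpos a b hab))).deriv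
  have L1 : pdx (pdx (fun a b => Real.log (ω a b))) x y =
      (pdx (pdx ω) x y * ω x y - pdx ω x y * pdx ω x y) / ω x y ^ 2 :=
    (pdx_congr hΩ hlx hp).trans
      (((hasDerivAt_pdx hΩ (contDiffOn_pdx hΩ hω) hp).div (hasDerivAt_pdx hΩ hω hp)
        (ne_of_gt (hωpos x y hp))).deriv)
  have L2 : pdy (pdy (fun a b => Real.log (ω a b))) x y =
      (pdy (pdy ω) x y * ω x y - pdy ω x y * pdy ω x y) / ω x y ^ 2 :=
    (pdy_congr hΩ hly hp).trans
      (((hasDerivAt_pdy hΩ (contDiffOn_pdy hΩ hω) hp).div (hasDerivAt_pdy hΩ hω hp)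
        (ne_of_gt (hωpos x y hp))).deriv)
  have E4 := hωeq x y hp
  have hw : ω x y ≠ 0 := ne_of_gt (hωpos x y hp)
  simp only [lap] at E4 ⊢
  rw [L1, L2]
  have Hcomb : (pdx (pdx ω) x y + pdy (pdy ω) x y) * θ x y +
      2 * (pdx ω x y * pdx θ x y + pdy ω x y * pdy θ x y) +
      ω x y * (pdx (pdx θ) x y + pdy (pdy θ) x y) =
      -2 * ω x y * pdx ω x y * pdy (fun s t => φ s t / ω s t) x y +
      2 * ω x y * pdy ω x y * pdx (fun s t => φ s t / ω s t) x y := by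
    linear_combination e2 - e1 + e4 - e3 - (ω x y * ω x y) * hm
  field_simp
  linear_combination (-(ω x y)) * Hcomb + 2 * pdx ω x y * E2 + 2 * pdy ω x y * E3 +
    (θ x y * ω x y) * E4
end
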